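/- Let b be locally integrable on R^m with dyadic BMO norm at most 1, J_0 a dyadic cube, and let F(J_0) be the iterated stopping family generated by the stopping condition |⟨b⟩_J − ⟨b⟩_{J_0}| > 4 (iterating inside each stopping cube). For J ∈ F(J_0), let π_F Q denote the minimal stopping cube containing a dyadic cube Q. Then for every J ∈ F(J_0), the sum of the martingale differences Δ_Q b over all dyadic Q ⊂ J_0 with π_F Q = J is bounded in L^∞ norm by an absolute constant (depending only on dimension). -/

import Mathlib

open MeasureTheory
open scoped ENNReal Classical

noncomputable section

/-- `ℝ^m`, modeled as functions `Fin m → ℝ`. -/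
abbrev Rd (m : ℕ) := Fin m → ℝ

/-- A dyadic cube in `ℝ^m` of the standard dyadic grid, encoded by its scale `k : ℤ`
(side length `2^k`) and its position `c : Fin m → ℤ`. -/
abbrev DC (m : ℕ) := ℤ × (Fin m → ℤ)

/-- The set in `ℝ^m` corresponding to an encoded dyadic cube. -/
def cubeSet {m : ℕ} (I : DC m) : Set (Rd m) :=
  {x | ∀ i, (I.2 i : ℝ) * 2 ^ I.1 ≤ x i ∧ x i < ((I.2 i : ℝ) + 1) * 2 ^ I.1}

/-- The dyadic cube of scale `k` containing the point `x`. -/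
def cubeAt (m : ℕ) (k : ℤ) (x : Rd m) : DC m := (k, fun i => ⌊x i / 2 ^ k⌋)

variable {m n : ℕ} {E : Type*} [NormedAddCommGroup E] [NormedSpace ℝ E]

/-- The average `⟨f⟩_I` of a (vector-valued) function over a dyadic cube. -/
def avg (I : DC m) (f : Rd m → E) : E :=
  ((volume (cubeSet I)).toReal)⁻¹ • ∫ x in cubeSet I, f x

/-- The martingale difference `Δ_I f`. -/
def mdiff (f : Rd m → E) (I : DC m) (x : Rd m) : E :=
  if x ∈ cubeSet I then avg (cubeAt m (I.1 - 1) x) f - avg I f else 0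

/-- The martingale block `Δ_K^i f = ∑_{I^{(i)} = K} Δ_I f`. -/
def mblock (i : ℕ) (f : Rd m → E) (K : DC m) (x : Rd m) : E :=
  if x ∈ cubeSet K then mdiff f (cubeAt m (K.1 - (i : ℤ)) x) x else 0

/-- Martingale difference in the first variable, `Δ_I^1 f`. -/
def mdiff1 (f : Rd n → Rd m → E) (I : DC n) (x₁ : Rd n) (x₂ : Rd m) : E :=
  mdiff (fun y₁ => f y₁ x₂) I x₁

/-- Martingale difference in the second variable, `Δ_J^2 f`. -/
def mdiff2 (f : Rd n → Rd m → E) (J : DC m) (x₁ : Rd n) (x₂ : Rd m) : E :=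
  mdiff (f x₁) J x₂

/-- The bi-parameter martingale difference `Δ_{I×J} f = Δ_I^1 (Δ_J^2 f)`. -/
def mdiffBi (f : Rd n → Rd m → E) (I : DC n) (J : DC m) (x₁ : Rd n) (x₂ : Rd m) : E :=
  mdiff1 (fun y₁ y₂ => mdiff2 f J y₁ y₂) I x₁ x₂

/-- The bi-parameter martingale block `Δ^{i,j}_{K×V} f`. -/
def mblockBi (i j : ℕ) (f : Rd n → Rd m → E) (K : DC n) (V : DC m)
    (x₁ : Rd n) (x₂ : Rd m) : E :=
  if x₁ ∈ cubeSet K ∧ x₂ ∈ cubeSet V then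
    mdiffBi f (cubeAt n (K.1 - (i : ℤ)) x₁) (cubeAt m (V.1 - (j : ℤ)) x₂) x₁ x₂
  else 0

/-- A sign pattern `η` is cancellative if it is nonzero. -/
def Cancel {m : ℕ} (η : Fin m → Bool) : Prop := ∃ i, η i = true

/-- The `L²`-normalised Haar function `h_I^η`. -/
def haar {m : ℕ} (I : DC m) (η : Fin m → Bool) (x : Rd m) : ℝ :=
  if x ∈ cubeSet I then
    ((2 : ℝ) ^ I.1) ^ (-(m : ℝ) / 2) *
      ∏ i, (if η i then (if x i < ((I.2 i : ℝ) + 1 / 2) * 2 ^ I.1 then (1 : ℝ) else -1) else 1)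
  else 0

/-- The Haar coefficient `⟨b, h_I^η⟩`. -/
def haarCoeff {m : ℕ} (b : Rd m → ℝ) (I : DC m) (η : Fin m → Bool) : ℝ :=
  ∫ y, b y * haar I η y

/-- `b` has dyadic BMO norm at most `B`. -/
def BMOle {m : ℕ} (b : Rd m → ℝ) (B : ℝ) : Prop :=
  ∀ I : DC m, avg I (fun x => |b x - avg I b|) ≤ B

/-- The dyadic paraproduct `π_b f = ∑_I ⟨f⟩_I Δ_I b`. -/
def paraproduct {m : ℕ} (b : Rd m → ℝ) (f : Rd m → E) (x : Rd m) : E :=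
  ∑' I : DC m, mdiff b I x • avg I f

/-- The sign `±1` attached to a boolean. -/
def sgn (b : Bool) : ℝ := if b then (1 : ℝ) else -1

/-- The `q`-th moment `(𝔼‖∑ εᵢ eᵢ‖^q)^{1/q}` of a Rademacher sum, with the random signs
realised on the canonical finite probability space `Fin N → Bool`. -/
def signAvg (q : ℝ) {N : ℕ} (e : Fin N → E) : ℝ :=
  ((∑ ω : Fin N → Bool, ‖∑ i, sgn (ω i) • e i‖ ^ q) / 2 ^ N) ^ (1 / q)

/-- A Banach space is UMD if martingale difference sequences are unconditional in `L^p`. -/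
def IsUMD (E : Type*) [NormedAddCommGroup E] [NormedSpace ℝ E] [CompleteSpace E] : Prop :=
  ∀ p : ℝ, 1 < p → ∃ β : ℝ≥0∞, β ≠ ⊤ ∧
    ∀ (Ω : Type) [mΩ : MeasurableSpace Ω] (P : Measure Ω), IsProbabilityMeasure P →
      ∀ (ℱ : Filtration ℕ mΩ) (g : ℕ → Ω → E), Martingale g ℱ P →
        ∀ (ε : ℕ → ℝ), (∀ i, ε i = 1 ∨ ε i = -1) → ∀ N : ℕ,
          eLpNorm (fun ω => ∑ i ∈ Finset.range N, ε i • (g (i + 1) ω - g i ω))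
              (ENNReal.ofReal p) P
            ≤ β * eLpNorm (fun ω => g N ω - g 0 ω) (ENNReal.ofReal p) P

/-- Pisier's property (α). -/
def HasPisierAlpha (E : Type*) [NormedAddCommGroup E] [NormedSpace ℝ E] : Prop :=
  ∃ C : ℝ, ∀ (N : ℕ) (α : Fin N → Fin N → ℝ), (∀ i j, |α i j| ≤ 1) →
    ∀ e : Fin N → Fin N → E,
      ((∑ ω : Fin N → Bool, ∑ ω' : Fin N → Bool,
          ‖∑ i, ∑ j, (sgn (ω i) * sgn (ω' j) * α i j) • e i j‖ ^ 2) / 4 ^ N) ^ (1 / 2 : ℝ)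
        ≤ C * ((∑ ω : Fin N → Bool, ∑ ω' : Fin N → Bool,
          ‖∑ i, ∑ j, (sgn (ω i) * sgn (ω' j)) • e i j‖ ^ 2) / 4 ^ N) ^ (1 / 2 : ℝ)

/-- `E` has (Rademacher) type `p` with constant `τ`. -/
def HasTypeWith (E : Type*) [NormedAddCommGroup E] [NormedSpace ℝ E] (p τ : ℝ) : Prop :=
  ∀ (N : ℕ) (e : Fin N → E), signAvg 2 e ≤ τ * (∑ i, ‖e i‖ ^ p) ^ (1 / p)

/-- `E` has (Rademacher) cotype `c` with constant `τ`. -/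
def HasCotypeWith (E : Type*) [NormedAddCommGroup E] [NormedSpace ℝ E] (c τ : ℝ) : Prop :=
  ∀ (N : ℕ) (e : Fin N → E), (∑ i, ‖e i‖ ^ c) ^ (1 / c) ≤ τ * signAvg 2 e

/-- `E`, together with the realisation map `val`, is a Banach function space (function lattice)
over the σ-finite measure space `(A, μ)`. -/
structure IsBFS (A : Type) [MeasurableSpace A] (μ : Measure A)
    (E : Type*) [NormedAddCommGroup E] [NormedSpace ℝ E] (val : E → A → ℝ) : Prop where
  measurable_val : ∀ e, Measurable (val e)
  map_add : ∀ e e', val (e + e') =ᵐ[μ] fun a => val e a + val e' a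
  map_smul : ∀ (c : ℝ) e, val (c • e) =ᵐ[μ] fun a => c * val e a
  injective : ∀ e, val e =ᵐ[μ] (fun _ => (0 : ℝ)) → e = 0
  mono : ∀ e e', (∀ᵐ a ∂μ, |val e a| ≤ |val e' a|) → ‖e‖ ≤ ‖e'‖
  ideal : ∀ (e : E) (g : A → ℝ), Measurable g → (∀ᵐ a ∂μ, |g a| ≤ |val e a|) →
    ∃ e' : E, val e' =ᵐ[μ] g

/-- The mixed norm `‖f‖_{L^q(ℝ^n; L^p(ℝ^m; E))}`. -/
def mixedNorm (q p : ℝ) (f : Rd n → Rd m → E) : ℝ≥0∞ :=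
  (∫⁻ x₁, ((∫⁻ x₂, (‖f x₁ x₂‖₊ : ℝ≥0∞) ^ p) ^ (1 / p)) ^ q) ^ (1 / q)

/-- The `L^q(ℝ^m; E)` norm. -/
def LpN (q : ℝ) (f : Rd m → E) : ℝ≥0∞ := eLpNorm f (ENNReal.ofReal q) volume

/-- Rademacher average of `L^q` norms (used to express `R`-boundedness on `L^q(ℝ^m;E)`). -/
def signLp (q : ℝ) {N : ℕ} (g : Fin N → Rd m → E) : ℝ≥0∞ :=
  ((∑ ω : Fin N → Bool, LpN q (fun x => ∑ i, sgn (ω i) • g i x) ^ 2) / 2 ^ N) ^ (1 / 2 : ℝ)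

/-- Rademacher average of mixed norms (used to express `R`-boundedness on
`L^q(ℝ^n; L^p(ℝ^m; E))`). -/
def signMixed (q p : ℝ) {N : ℕ} (g : Fin N → Rd n → Rd m → E) : ℝ≥0∞ :=
  ((∑ ω : Fin N → Bool, mixedNorm q p (fun x₁ x₂ => ∑ i, sgn (ω i) • g i x₁ x₂) ^ 2)
      / 2 ^ N) ^ (1 / 2 : ℝ)

/-- The averaging operator `A_V` with operator-valued kernel `a`. -/
def avgOp (a : Rd m → Rd m → (E →L[ℝ] E)) (V : DC m) (g : Rd m → E) (z : Rd m) : E :=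
  if z ∈ cubeSet V then ((volume (cubeSet V)).toReal)⁻¹ • ∫ y in cubeSet V, a z y (g y) else 0

/-- The operator-valued dyadic shift `S^{i₁,i₂} f = ∑_V Δ_V^{i₂} A_V Δ_V^{i₁} f`. -/
def dyadicShift (i₁ i₂ : ℕ) (a : DC m → Rd m → Rd m → (E →L[ℝ] E))
    (f : Rd m → E) (x : Rd m) : E :=
  ∑' V : DC m, mblock i₂ (avgOp (a V) V (fun y => mblock i₁ f V y)) V x

/-- The bi-parameter averaging operator `A_{K,V}`. -/
def avgOpBi (a : (Rd n × Rd m) → (Rd n × Rd m) → (E →L[ℝ] E)) (K : DC n) (V : DC m)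
    (g : Rd n → Rd m → E) (z₁ : Rd n) (z₂ : Rd m) : E :=
  if z₁ ∈ cubeSet K ∧ z₂ ∈ cubeSet V then
    ((volume (cubeSet K)).toReal * (volume (cubeSet V)).toReal)⁻¹ •
      ∫ y₁ in cubeSet K, ∫ y₂ in cubeSet V, a (z₁, z₂) (y₁, y₂) (g y₁ y₂)
  else 0

/-- The operator-valued bi-parameter dyadic shift. -/
def dyadicShiftBi (i₁ i₂ j₁ j₂ : ℕ)
    (a : DC n → DC m → (Rd n × Rd m) → (Rd n × Rd m) → (E →L[ℝ] E))
    (f : Rd n → Rd m → E) (x₁ : Rd n) (x₂ : Rd m) : E :=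
  ∑' K : DC n, ∑' V : DC m,
    mblockBi i₂ j₂
      (fun z₁ z₂ => avgOpBi (a K V) K V (fun y₁ y₂ => mblockBi i₁ j₁ f K V y₁ y₂) z₁ z₂)
      K V x₁ x₂

/-- The average of a function over a product `V × U` of dyadic cubes. -/
def biAvg (V : DC n) (U : DC m) (f : Rd n → Rd m → E) : E :=
  ((volume (cubeSet V)).toReal * (volume (cubeSet U)).toReal)⁻¹ •
    ∫ y₁ in cubeSet V, ∫ y₂ in cubeSet U, f y₁ y₂

/-- The bi-parameter Haar coefficient `⟨b, h_V^η ⊗ h_U^θ⟩`. -/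
def haarCoeff2 (b : Rd n → Rd m → ℝ) (V : DC n) (η : Fin n → Bool)
    (U : DC m) (θ : Fin m → Bool) : ℝ :=
  ∫ y₁, ∫ y₂, b y₁ y₂ * (haar V η y₁ * haar U θ y₂)

/-- The standard full bi-parameter paraproduct `Π_b`. -/
def fullPara (b : Rd n → Rd m → ℝ) (f : Rd n → Rd m → E) (x₁ : Rd n) (x₂ : Rd m) : E :=
  ∑' V : DC n, ∑' U : DC m, ∑' η : Fin n → Bool, ∑' θ : Fin m → Bool,
    if Cancel η ∧ Cancel θ then
      (haarCoeff2 b V η U θ * (haar V η x₁ * haar U θ x₂)) • biAvg V U f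
    else 0

/-- The mixed full bi-parameter paraproduct `Π^{mixed}_b`. -/
def mixedPara (b : Rd n → Rd m → ℝ) (f : Rd n → Rd m → E) (x₁ : Rd n) (x₂ : Rd m) : E :=
  ∑' V : DC n, ∑' U : DC m, ∑' η : Fin n → Bool, ∑' θ : Fin m → Bool,
    if Cancel η ∧ Cancel θ then
      (haarCoeff2 b V η U θ *
          (Set.indicator (cubeSet V) (fun _ => (1 : ℝ)) x₁ *
            ((volume (cubeSet V)).toReal)⁻¹ * haar U θ x₂)) •
        (∫ y₁, haar V η y₁ •
          (((volume (cubeSet U)).toReal)⁻¹ • ∫ y₂ in cubeSet U, f y₁ y₂))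
    else 0

/-- An admissible set `Ω` for the definition of the product BMO norm: finite measure, and
every point of `Ω` lies in a product of dyadic cubes contained in `Ω`. -/
def AdmissibleOmega {n m : ℕ} (Ω : Set (Rd n × Rd m)) : Prop :=
  volume Ω < ⊤ ∧
    ∀ x ∈ Ω, ∃ (V : DC n) (U : DC m),
      x ∈ cubeSet V ×ˢ cubeSet U ∧ cubeSet V ×ˢ cubeSet U ⊆ Ω

/-- `b` has dyadic product BMO norm at most `B` (Chang–Fefferman characterization via
the Haar coefficient sequence). -/
def BMOprodFnLe {n m : ℕ} (b : Rd n → Rd m → ℝ) (B : ℝ) : Prop :=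
  ∀ Ω : Set (Rd n × Rd m), AdmissibleOmega Ω →
    (∑' V : DC n, ∑' U : DC m,
        (if cubeSet V ×ˢ cubeSet U ⊆ Ω then
          ∑ η : Fin n → Bool, ∑ θ : Fin m → Bool,
            (if Cancel η ∧ Cancel θ then haarCoeff2 b V η U θ ^ 2 else 0)
        else 0))
      ≤ B ^ 2 * (volume Ω).toReal

/-- The partial Haar pairing `⟨f, h_{I}^η⟩₁` in the first variable. -/
def pairing1 (f : Rd n → Rd m → E) (I : DC n) (η : Fin n → Bool) (x₂ : Rd m) : E :=
  ∫ y₁, haar I η y₁ • f y₁ x₂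

/-- The bi-parameter partial paraproduct
`P f = ∑_K ∑_{I₁^{(i₁)} = I₂^{(i₂)} = K} h_{I₂} ⊗ π_{b_{K,I₁,I₂}} (⟨f, h_{I₁}⟩₁)`. -/
def partialPara (i₁ i₂ : ℕ)
    (b : DC n → DC n → DC n → (Fin n → Bool) → (Fin n → Bool) → Rd m → ℝ)
    (f : Rd n → Rd m → E) (x₁ : Rd n) (x₂ : Rd m) : E :=
  ∑' K : DC n, ∑' I₁ : DC n, ∑' I₂ : DC n, ∑' η₁ : Fin n → Bool, ∑' η₂ : Fin n → Bool,
    if Cancel η₁ ∧ Cancel η₂ ∧ I₁.1 + (i₁ : ℤ) = K.1 ∧ cubeSet I₁ ⊆ cubeSet K ∧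
        I₂.1 + (i₂ : ℤ) = K.1 ∧ cubeSet I₂ ⊆ cubeSet K then
      haar I₂ η₂ x₁ • paraproduct (b K I₁ I₂ η₁ η₂) (pairing1 f I₁ η₁) x₂
    else 0

/-- The bi-parameter dyadic (lattice) strong maximal function, acting pointwise in the
lattice variable `a`. -/
def strongMax {A : Type} (val : E → A → ℝ) (f : Rd n → Rd m → E)
    (x₁ : Rd n) (x₂ : Rd m) (a : A) : ℝ :=
  ⨆ V : DC n, ⨆ U : DC m,
    if x₁ ∈ cubeSet V ∧ x₂ ∈ cubeSet U then
      ((volume (cubeSet V)).toReal * (volume (cubeSet U)).toReal)⁻¹ *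
        ∫ y₁ in cubeSet V, ∫ y₂ in cubeSet U, |val (f y₁ y₂) a|
    else 0

end

/-- `J` is a (first generation) stopping child of `P` for the function `b`:
a maximal dyadic cube inside `P` with `|⟨b⟩_J - ⟨b⟩_P| > 4`. -/
def isStopChild {m : ℕ} (b : Rd m → ℝ) (P J : DC m) : Prop :=
  (cubeSet J ⊆ cubeSet P ∧ 4 < |avg J b - avg P b|) ∧
  ∀ J' : DC m, (cubeSet J' ⊆ cubeSet P ∧ 4 < |avg J' b - avg P b|) →
    cubeSet J ⊆ cubeSet J' → cubeSet J = cubeSet J'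

/-- The iterated stopping family `F(J₀) = ⋃_j F^j(J₀)` generated by the stopping condition. -/
inductive stopFam {m : ℕ} (b : Rd m → ℝ) (J₀ : DC m) : DC m → Prop
  | base : stopFam b J₀ J₀
  | step (P J : DC m) : stopFam b J₀ P → isStopChild b P J → stopFam b J₀ J


/-!
Fix `x ∈ J`. The cubes of the tree containing `x` are the `cubeAt m k x` with `k` in an
interval ending at `J.1`, because the tree is closed upwards inside `J`. Along this chain
`Δ_Q b (x) = ⟨b⟩_{Q'} - ⟨b⟩_Q`, `Q'` the child of `Q` containing `x`, so every partial sum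
telescopes to `⟨b⟩_{Q'} - ⟨b⟩_J` with `Q` in the tree. Now `|⟨b⟩_{Q'} - ⟨b⟩_Q| ≤ 2^m` by the
BMO condition, and `|⟨b⟩_Q - ⟨b⟩_J| ≤ 4`: otherwise the largest cube between `Q` and `J`
violating this would be a stopping child of `J` containing `Q`, contradicting the minimality
of `J`. The bound `2^m + 4` then holds at every point, not only almost everywhere.
-/

section DyadicCubes

variable {m : ℕ}

lemma two_zpow_pos (k : ℤ) : (0 : ℝ) < 2 ^ k := zpow_pos two_pos k

lemma mem_cubeSet_iff {I : DC m} {x : Rd m} : x ∈ cubeSet I ↔ cubeAt m I.1 x = I := by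
  obtain ⟨k, c⟩ := I
  simp only [cubeSet, cubeAt, Set.mem_ofPred_eq, Prod.mk.injEq, true_and, funext_iff,
    Int.floor_eq_iff, le_div_iff₀ (two_zpow_pos k), div_lt_iff₀ (two_zpow_pos k)]

lemma mem_cubeSet_cubeAt (k : ℤ) (x : Rd m) : x ∈ cubeSet (cubeAt m k x) :=
  mem_cubeSet_iff.2 rfl

lemma floor_div_two_zpow_of_le (t : ℝ) {k k' : ℤ} (h : k ≤ k') :
    ⌊t / 2 ^ k'⌋ = ⌊t / 2 ^ k⌋ / 2 ^ (k' - k).toNat := by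
  have hpow : (2 : ℝ) ^ k' = 2 ^ k * ((2 ^ (k' - k).toNat : ℕ) : ℝ) := by
    rw [Nat.cast_pow, Nat.cast_ofNat, ← zpow_natCast, ← zpow_add₀ two_ne_zero]
    congr 1
    omega
  rw [hpow, ← div_div, Int.floor_div_natCast, Nat.cast_pow, Nat.cast_ofNat]

lemma cubeAt_eq_cubeAt_of_le {x y : Rd m} {k k' : ℤ} (h : k ≤ k')
    (hxy : cubeAt m k y = cubeAt m k x) : cubeAt m k' y = cubeAt m k' x := by
  simp only [cubeAt, Prod.mk.injEq, true_and, funext_iff] at hxy ⊢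
  intro i
  rw [floor_div_two_zpow_of_le _ h, floor_div_two_zpow_of_le _ h, hxy i]

lemma cubeSet_cubeAt_mono (x : Rd m) {k k' : ℤ} (h : k ≤ k') :
    cubeSet (cubeAt m k x) ⊆ cubeSet (cubeAt m k' x) :=
  fun _ hy => mem_cubeSet_iff.2 (cubeAt_eq_cubeAt_of_le h (mem_cubeSet_iff.1 hy))

lemma cubeSet_cubeAt_subset {I : DC m} {x : Rd m} (hx : x ∈ cubeSet I) {k : ℤ} (h : k ≤ I.1) :
    cubeSet (cubeAt m k x) ⊆ cubeSet I :=
  mem_cubeSet_iff.1 hx ▸ cubeSet_cubeAt_mono x h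

lemma volume_cubeSet (I : DC m) : volume (cubeSet I) = ENNReal.ofReal (2 ^ I.1) ^ m := by
  have hpi : cubeSet I =
      Set.univ.pi fun i => Set.Ico ((I.2 i : ℝ) * 2 ^ I.1) ((I.2 i + 1) * 2 ^ I.1) := by
    ext y
    simp [cubeSet, Set.mem_pi]
  simp only [hpi, volume_pi_pi, Real.volume_Ico, add_mul, one_mul, add_sub_cancel_left,
    Finset.prod_const, Finset.card_univ, Fintype.card_fin]

lemma volume_cubeSet_ne_top (I : DC m) : volume (cubeSet I) ≠ ⊤ := by
  rw [volume_cubeSet]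
  exact ENNReal.pow_ne_top ENNReal.ofReal_ne_top

lemma volume_cubeSet_toReal (I : DC m) : (volume (cubeSet I)).toReal = (2 ^ I.1) ^ m := by
  rw [volume_cubeSet, ENNReal.toReal_pow, ENNReal.toReal_ofReal (two_zpow_pos I.1).le]

lemma scale_le_of_cubeSet_subset (hm : m ≠ 0) {I I' : DC m} (h : cubeSet I ⊆ cubeSet I') :
    I.1 ≤ I'.1 := by
  have hvol := ENNReal.toReal_mono (volume_cubeSet_ne_top I') (measure_mono h)
  rw [volume_cubeSet_toReal, volume_cubeSet_toReal,
    pow_le_pow_iff_left₀ (two_zpow_pos _).le (two_zpow_pos _).le hm] at hvol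
  exact (zpow_le_zpow_iff_right₀ one_lt_two).1 hvol

lemma mdiff_cubeAt_self {E : Type*} [NormedAddCommGroup E] [NormedSpace ℝ E] (f : Rd m → E)
    (k : ℤ) (x : Rd m) :
    mdiff f (cubeAt m k x) x = avg (cubeAt m (k - 1) x) f - avg (cubeAt m k x) f :=
  if_pos (mem_cubeSet_cubeAt k x)

lemma mdiff_eq_zero_of_dim_eq_zero {E : Type*} [NormedAddCommGroup E] [NormedSpace ℝ E]
    (f : Rd 0 → E) (I : DC 0) (x : Rd 0) : mdiff f I x = 0 := by
  have hcube : ∀ J : DC 0, cubeSet J = Set.univ := fun J => Set.eq_univ_of_forall fun _ i => i.elim0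
  simp only [mdiff, avg, hcube, sub_self, ite_self]

end DyadicCubes

section Averages

variable {m : ℕ} {b : Rd m → ℝ}

lemma integrableOn_cubeSet (hb : LocallyIntegrable b volume) (I : DC m) :
    IntegrableOn b (cubeSet I) volume := by
  have hsub : cubeSet I ⊆
      Set.univ.pi fun i => Set.Icc ((I.2 i : ℝ) * 2 ^ I.1) ((I.2 i + 1) * 2 ^ I.1) :=
    fun y hy => Set.mem_univ_pi.2 fun i => ⟨(hy i).1, (hy i).2.le⟩
  exact (hb.integrableOn_isCompact (isCompact_univ_pi fun _ => isCompact_Icc)).mono_set hsub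

lemma avg_sub_const (hb : LocallyIntegrable b volume) (I : DC m) (c : ℝ) :
    avg I (fun y => b y - c) = avg I b - c := by
  have hvol : (volume (cubeSet I)).toReal ≠ 0 := by
    rw [volume_cubeSet_toReal]
    exact pow_ne_zero _ (two_zpow_pos _).ne'
  have hc : IntegrableOn (fun _ => c) (cubeSet I) volume :=
    integrableOn_const (volume_cubeSet_ne_top I)
  rw [avg, avg, integral_sub (integrableOn_cubeSet hb I) hc, setIntegral_const, smul_sub,
    smul_smul, measureReal_def, inv_mul_cancel₀ hvol, one_smul]

lemma abs_avg_le_avg_abs (I : DC m) (f : Rd m → ℝ) : |avg I f| ≤ avg I fun y => |f y| := by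
  simp only [avg, smul_eq_mul, abs_mul, abs_inv, ENNReal.abs_toReal]
  gcongr
  exact abs_integral_le_integral_abs

lemma abs_avg_sub_le_of_subset (hb : LocallyIntegrable b volume) {Q' Q : DC m}
    (h : cubeSet Q' ⊆ cubeSet Q) (c : ℝ) :
    |avg Q' b - c| ≤ (volume (cubeSet Q)).toReal / (volume (cubeSet Q')).toReal *
      avg Q fun y => |b y - c| := by
  have hQ : (volume (cubeSet Q)).toReal ≠ 0 := by
    rw [volume_cubeSet_toReal]
    exact pow_ne_zero _ (two_zpow_pos _).ne'
  have hint : IntegrableOn (fun y => |b y - c|) (cubeSet Q) volume :=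
    ((integrableOn_cubeSet hb Q).sub (integrableOn_const (volume_cubeSet_ne_top Q))).abs
  have hmono : ∫ y in cubeSet Q', |b y - c| ≤ ∫ y in cubeSet Q, |b y - c| :=
    setIntegral_mono_set hint (.of_forall fun _ => abs_nonneg _) h.eventuallyLE
  calc |avg Q' b - c| = |avg Q' fun y => b y - c| := by rw [avg_sub_const hb]
    _ ≤ avg Q' fun y => |b y - c| := abs_avg_le_avg_abs _ _
    _ ≤ ((volume (cubeSet Q')).toReal)⁻¹ * ∫ y in cubeSet Q, |b y - c| := by
        rw [avg, smul_eq_mul]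
        gcongr
    _ = _ := by
        rw [avg, smul_eq_mul, ← mul_assoc, div_mul_eq_mul_div, mul_inv_cancel₀ hQ, one_div]

lemma abs_avg_cubeAt_sub_one_sub_le {B : ℝ} (hb : LocallyIntegrable b volume) (hB : BMOle b B)
    (k : ℤ) (x : Rd m) :
    |avg (cubeAt m (k - 1) x) b - avg (cubeAt m k x) b| ≤ 2 ^ m * B := by
  have hratio : (volume (cubeSet (cubeAt m k x))).toReal /
      (volume (cubeSet (cubeAt m (k - 1) x))).toReal = 2 ^ m := by
    rw [volume_cubeSet_toReal, volume_cubeSet_toReal, ← div_pow, cubeAt, cubeAt,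
      ← zpow_sub₀ two_ne_zero, sub_sub_cancel, zpow_one]
  calc _ ≤ _ := abs_avg_sub_le_of_subset hb (cubeSet_cubeAt_mono x (sub_le_self k one_pos.le)) _
    _ ≤ 2 ^ m * B := by
      rw [hratio]
      exact mul_le_mul_of_nonneg_left (hB _) (by positivity)

lemma BMOle.nonneg {B : ℝ} (hB : BMOle b B) : 0 ≤ B := by
  refine le_trans ?_ (hB ((0 : ℤ), 0))
  rw [avg, smul_eq_mul]
  exact mul_nonneg (by positivity) (integral_nonneg fun _ => abs_nonneg _)

end Averages

section Stopping

variable {m : ℕ} {b : Rd m → ℝ} {J₀ : DC m}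

lemma exists_isStopChild_cubeAt (hm : m ≠ 0) {P : DC m} {x : Rd m} (hx : x ∈ cubeSet P) {k : ℤ}
    (hk : k ≤ P.1) (hbad : 4 < |avg (cubeAt m k x) b - avg P b|) :
    ∃ k', k ≤ k' ∧ isStopChild b P (cubeAt m k' x) := by
  obtain ⟨k', ⟨hk'P, hbad'⟩, hmax⟩ := Int.exists_greatest_of_bdd
    (P := fun j => j ≤ P.1 ∧ 4 < |avg (cubeAt m j x) b - avg P b|)
    ⟨P.1, fun _ hj => hj.1⟩ ⟨k, hk, hbad⟩
  refine ⟨k', hmax k ⟨hk, hbad⟩, ⟨cubeSet_cubeAt_subset hx hk'P, hbad'⟩, ?_⟩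
  rintro J' ⟨hJ'P, hJ'bad⟩ hsub
  have hJ' : cubeAt m J'.1 x = J' := mem_cubeSet_iff.1 (hsub (mem_cubeSet_cubeAt k' x))
  have hscale : J'.1 = k' := le_antisymm
    (hmax J'.1 ⟨scale_le_of_cubeSet_subset hm hJ'P, by rwa [hJ']⟩)
    (scale_le_of_cubeSet_subset hm hsub)
  rw [← hJ', hscale]

/-- `{Q ⊆ J₀ : π_F Q = J}` in the notation of the paper. -/
def stoppingTree (b : Rd m → ℝ) (J₀ J : DC m) : Set (DC m) :=
  {Q | cubeSet Q ⊆ cubeSet J₀ ∧ cubeSet Q ⊆ cubeSet J ∧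
    ∀ J', stopFam b J₀ J' → cubeSet Q ⊆ cubeSet J' → cubeSet J ⊆ cubeSet J'}

lemma cubeAt_mem_stoppingTree_of_le {J : DC m} {x : Rd m} (hx : x ∈ cubeSet J) {k k' : ℤ}
    (hk : cubeAt m k x ∈ stoppingTree b J₀ J) (hkk' : k ≤ k') (hk' : k' ≤ J.1) :
    cubeAt m k' x ∈ stoppingTree b J₀ J := by
  have hJ : cubeSet (cubeAt m k' x) ⊆ cubeSet J := cubeSet_cubeAt_subset hx hk'
  exact ⟨hJ.trans (hk.2.2 J₀ .base hk.1), hJ,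
    fun J' hJ' h => hk.2.2 J' hJ' ((cubeSet_cubeAt_mono x hkk').trans h)⟩

lemma abs_avg_sub_avg_le_four_of_mem_stoppingTree (hm : m ≠ 0) {J : DC m} (hJ : stopFam b J₀ J)
    {x : Rd m} (hx : x ∈ cubeSet J) {k : ℤ} (hk : cubeAt m k x ∈ stoppingTree b J₀ J) :
    |avg (cubeAt m k x) b - avg J b| ≤ 4 := by
  by_contra! hbad
  obtain ⟨k', hkk', hchild⟩ :=
    exists_isStopChild_cubeAt hm hx (scale_le_of_cubeSet_subset hm hk.2.1) hbad
  have hJsub : cubeSet J ⊆ cubeSet (cubeAt m k' x) :=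
    hk.2.2 _ (hJ.step _ _ hchild) (cubeSet_cubeAt_mono x hkk')
  have havg : avg (cubeAt m k' x) b = avg J b := by
    simp only [avg, hchild.1.1.antisymm hJsub]
  have := hchild.1.2
  rw [havg, sub_self, abs_zero] at this
  linarith

end Stopping

lemma abs_tsum_le_of_forall_abs_sum_range_le {g : ℕ → ℝ} {C : ℝ} (hC : 0 ≤ C)
    (h : ∀ N, |∑ n ∈ Finset.range N, g n| ≤ C) : |∑' n, g n| ≤ C := by
  by_cases hg : Summable g
  · exact le_of_tendsto hg.hasSum.tendsto_sum_nat.abs (.of_forall h)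
  · rwa [tsum_eq_zero_of_not_summable hg, abs_zero]

lemma abs_sum_range_ite_sub_le {P : ℕ → Prop} [DecidablePred P] (hP : Antitone P)
    {u : ℕ → ℝ} {C : ℝ} (hC : 0 ≤ C) (hu : ∀ n, P n → |u (n + 1) - u 0| ≤ C) (N : ℕ) :
    |∑ n ∈ Finset.range N, if P n then u (n + 1) - u n else 0| ≤ C := by
  induction N with
  | zero => simpa using hC
  | succ N ih =>
    by_cases hN : P N
    · rw [Finset.sum_congr rfl fun n hn =>
        if_pos (hP (Nat.lt_succ_iff.1 (Finset.mem_range.1 hn)) hN), Finset.sum_range_sub]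
      exact hu N hN
    · rwa [Finset.sum_range_succ, if_neg hN, add_zero]

lemma support_indicator_mdiff_subset {m : ℕ} {E : Type*} [NormedAddCommGroup E]
    [NormedSpace ℝ E] (hm : m ≠ 0) {S : Set (DC m)} {J : DC m}
    (hS : ∀ Q ∈ S, cubeSet Q ⊆ cubeSet J) (f : Rd m → E) (x : Rd m) :
    (S.indicator fun Q => mdiff f Q x).support ⊆ Set.range fun n : ℕ => cubeAt m (J.1 - n) x := by
  intro Q hQ
  obtain ⟨hQS, hQx⟩ := Set.indicator_apply_ne_zero.1 hQ
  have hxQ : x ∈ cubeSet Q := by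
    by_contra h
    exact hQx (if_neg h)
  have hscale := scale_le_of_cubeSet_subset hm (hS Q hQS)
  refine ⟨(J.1 - Q.1).toNat, ?_⟩
  show cubeAt m (J.1 - ((J.1 - Q.1).toNat : ℤ)) x = Q
  rw [Int.toNat_of_nonneg (sub_nonneg.2 hscale), sub_sub_cancel, mem_cubeSet_iff.1 hxQ]

lemma abs_tsum_indicator_stoppingTree_mdiff_le {m : ℕ} {b : Rd m → ℝ} {B : ℝ}
    (hb : LocallyIntegrable b volume) (hB : BMOle b B) {J₀ J : DC m} (hJ : stopFam b J₀ J)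
    (x : Rd m) :
    |∑' Q, (stoppingTree b J₀ J).indicator (fun Q => mdiff b Q x) Q| ≤ 2 ^ m * B + 4 := by
  have hC : 0 ≤ 2 ^ m * B + 4 := by
    have := hB.nonneg
    positivity
  rcases eq_or_ne m 0 with rfl | hm
  · simpa [mdiff_eq_zero_of_dim_eq_zero] using hC
  by_cases hx : x ∈ cubeSet J
  swap
  · have hzero : ∀ Q, (stoppingTree b J₀ J).indicator (fun Q => mdiff b Q x) Q = 0 :=
      fun Q => Set.indicator_apply_eq_zero.2 fun hQ => if_neg fun hxQ => hx (hQ.2.1 hxQ)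
    simpa [hzero] using hC
  set f : DC m → ℝ := (stoppingTree b J₀ J).indicator fun Q => mdiff b Q x with hf
  set e : ℕ → DC m := fun n => cubeAt m (J.1 - n) x with he_def
  set u : ℕ → ℝ := fun n => avg (cubeAt m (J.1 - n) x) b with hu_def
  have he : e.Injective := fun i j hij => by
    have := congrArg Prod.fst hij
    simp only [he_def, cubeAt] at this
    omega
  have hsupp : f.support ⊆ Set.range e :=
    support_indicator_mdiff_subset hm (fun Q hQ => hQ.2.1) b x
  have hfe : ∀ n, f (e n) = if e n ∈ stoppingTree b J₀ J then u (n + 1) - u n else 0 := by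
    intro n
    simp only [hf, he_def, hu_def, Set.indicator_apply, mdiff_cubeAt_self, Nat.cast_succ, sub_sub]
  have hu0 : u 0 = avg J b := by
    simp only [hu_def, Nat.cast_zero, sub_zero, mem_cubeSet_iff.1 hx]
  rw [← he.tsum_eq hsupp]
  refine abs_tsum_le_of_forall_abs_sum_range_le hC fun N => ?_
  simp only [hfe]
  refine abs_sum_range_ite_sub_le (fun n n' hnn' hn' => ?_) hC (fun n hn => ?_) N
  · exact cubeAt_mem_stoppingTree_of_le hx hn' (by omega) (by omega)
  · calc |u (n + 1) - u 0| ≤ |u (n + 1) - u n| + |u n - u 0| := abs_sub_le _ _ _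
      _ ≤ 2 ^ m * B + 4 := by
        refine add_le_add ?_ ?_
        · simpa only [hu_def, Nat.cast_succ, ← sub_sub] using
            abs_avg_cubeAt_sub_one_sub_le hb hB (J.1 - n) x
        · exact hu0 ▸ abs_avg_sub_avg_le_four_of_mem_stoppingTree hm hJ hx hn

/-- for each stopping cube `J ∈ F(J₀)`, the sum of the martingale differences
`Δ_Q b` over the dyadic cubes `Q ⊆ J₀` whose minimal stopping cube is `J` is bounded in `L^∞`
by a constant depending only on the dimension. -/
theorem stmt2 (m : ℕ) : ∃ C : ℝ, 0 < C ∧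
    ∀ (b : Rd m → ℝ), MeasureTheory.LocallyIntegrable b volume → BMOle b 1 →
    ∀ (J₀ J : DC m), stopFam b J₀ J →
      ∀ᵐ x ∂(volume : MeasureTheory.Measure (Rd m)),
        |∑' Q : DC m,
            ({Q : DC m | cubeSet Q ⊆ cubeSet J₀ ∧ cubeSet Q ⊆ cubeSet J ∧
                ∀ J' : DC m, stopFam b J₀ J' → cubeSet Q ⊆ cubeSet J' →
                  cubeSet J ⊆ cubeSet J'} : Set (DC m)).indicator
              (fun Q => mdiff b Q x) Q| ≤ C := by
  refine ⟨2 ^ m + 4, by positivity, fun b hb hB J₀ J hJ => .of_forall fun x => ?_⟩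
  have hbound := abs_tsum_indicator_stoppingTree_mdiff_le hb hB hJ x
  rw [mul_one] at hbound
  exact hbound
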